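/- arXiv:2208.07151 — 7 statements merged into one kernel-verified Lean document; each statement's English description precedes it below -/
import Mathlib

section
/- For every strategy profile α and every user k, the potential function decomposes as φ α = w k * (Σ over n ≠ k of w n * [α n = α k]) * [α k > 0] + w k * V k * [α k = 0] + (1/2) * Σ over l ≠ k Σ over n with n ≠ l and n ≠ k of w l * w n * [α n = α l] * [α l > 0] + Σ over l ≠ k of w l * V l * [α l = 0]. -/
/-! Every unordered pair of users is counted twice in the double sum of `φ`, and the pair
weight `w l * w n * [α n = α l] * [α l > 0]` is symmetric in `l, n` because `α n = α l`
makes the two activity indicators agree. Hence the pairs containing `k` contribute twice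
the interference term of user `k`, which cancels the factor `1/2`. -/

open Finset

theorem Finset.sum_sum_erase_eq_two_mul_add {ι R : Type*} [DecidableEq ι] [CommSemiring R]
    (s : Finset ι) (f : ι → ι → R) (hf : ∀ l n, f l n = f n l) {k : ι} (hk : k ∈ s) :
    ∑ l ∈ s, ∑ n ∈ s.erase l, f l n =
      2 * ∑ n ∈ s.erase k, f k n + ∑ l ∈ s.erase k, ∑ n ∈ (s.erase l).erase k, f l n := by
  have split_off_k : ∀ l ∈ s.erase k,
      ∑ n ∈ s.erase l, f l n = f k l + ∑ n ∈ (s.erase l).erase k, f l n := fun l hl => by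
    rw [hf k l, add_sum_erase _ _ (mem_erase.2 ⟨(ne_of_mem_erase hl).symm, hk⟩)]
  rw [← add_sum_erase s _ hk, sum_congr rfl split_off_k, sum_add_distrib, two_mul, add_assoc]

theorem pairWeight_symm {ι A R : Type*} [DecidableEq A] [LT A] [DecidableLT A] [Zero A]
    [CommSemiring R] (w : ι → R) (α : ι → A) (l n : ι) :
    w l * w n * (if α n = α l then (1 : R) else 0) * (if 0 < α l then (1 : R) else 0) =
      w n * w l * (if α l = α n then (1 : R) else 0) * (if 0 < α n then (1 : R) else 0) := by
  by_cases hln : α n = α l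
  · rw [hln, mul_comm (w l)]
  · simp [hln, Ne.symm hln]

theorem potential_decomposition_general (K M : ℕ)
    (w : Fin K → ℝ)
    (V : Fin K → ℝ)
    (φ : (Fin K → Fin (M + 1)) → ℝ)
    (hφ : ∀ α, φ α =
      (1 / 2) * ∑ k : Fin K, ∑ n ∈ Finset.univ.erase k,
          w k * w n * (if α n = α k then (1 : ℝ) else 0) * (if 0 < α k then (1 : ℝ) else 0)
      + ∑ k : Fin K, w k * V k * (if α k = 0 then (1 : ℝ) else 0))
    (α : Fin K → Fin (M + 1)) (k : Fin K) :
    φ α =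
      w k * (∑ n ∈ Finset.univ.erase k, w n * (if α n = α k then (1 : ℝ) else 0))
          * (if 0 < α k then (1 : ℝ) else 0)
      + w k * V k * (if α k = 0 then (1 : ℝ) else 0)
      + (1 / 2) * ∑ l ∈ Finset.univ.erase k, ∑ n ∈ (Finset.univ.erase l).erase k,
          w l * w n * (if α n = α l then (1 : ℝ) else 0) * (if 0 < α l then (1 : ℝ) else 0)
      + ∑ l ∈ Finset.univ.erase k, w l * V l * (if α l = 0 then (1 : ℝ) else 0) := by
  have interference_of_k :
      ∑ n ∈ univ.erase k,
          w k * w n * (if α n = α k then (1 : ℝ) else 0) * (if 0 < α k then (1 : ℝ) else 0) =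
        w k * (∑ n ∈ univ.erase k, w n * (if α n = α k then (1 : ℝ) else 0))
          * (if 0 < α k then (1 : ℝ) else 0) := by
    simp only [mul_sum, sum_mul, mul_assoc]
  rw [hφ α, sum_sum_erase_eq_two_mul_add univ _ (pairWeight_symm w α) (mem_univ k),
    interference_of_k, ← add_sum_erase univ _ (mem_univ k)]
  ring

/-- Decomposition of the potential function isolating user `k`. -/
theorem potential_decomposition (K M : ℕ) (p h : Fin K → ℝ)
    (hp : ∀ k, 0 < p k) (hh : ∀ k, 0 < h k)
    (w : Fin K → ℝ) (hw : ∀ k, w k = p k * h k)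
    (V : Fin K → ℝ)
    (φ : (Fin K → Fin (M + 1)) → ℝ)
    (hφ : ∀ α, φ α =
      (1 / 2) * ∑ k : Fin K, ∑ n ∈ Finset.univ.erase k,
          w k * w n * (if α n = α k then (1 : ℝ) else 0) * (if 0 < α k then (1 : ℝ) else 0)
      + ∑ k : Fin K, w k * V k * (if α k = 0 then (1 : ℝ) else 0))
    (α : Fin K → Fin (M + 1)) (k : Fin K) :
    φ α =
      w k * (∑ n ∈ Finset.univ.erase k, w n * (if α n = α k then (1 : ℝ) else 0))
          * (if 0 < α k then (1 : ℝ) else 0)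
      + w k * V k * (if α k = 0 then (1 : ℝ) else 0)
      + (1 / 2) * ∑ l ∈ Finset.univ.erase k, ∑ n ∈ (Finset.univ.erase l).erase k,
          w l * w n * (if α n = α l then (1 : ℝ) else 0) * (if 0 < α l then (1 : ℝ) else 0)
      + ∑ l ∈ Finset.univ.erase k, w l * V l * (if α l = 0 then (1 : ℝ) else 0) :=
  potential_decomposition_general K M w V φ hφ α k
end

section
/- Let α and α' be strategy profiles that agree at every coordinate n ≠ k, with α k > 0 and α' k > 0. Then φ α − φ α' = w k * (Υ k α − Υ k α'). -/
/-!
Only the pairwise terms involving user `k` change between `α` and `α'`, and the local-computation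
terms do not change at all since `k` offloads in both profiles. The pairwise kernel is symmetric,
so the pairs `(k, n)` and `(n, k)` contribute equally, cancelling the factor `1 / 2`; the row of
`k` sums to `w k * Υ k`.
-/

open Finset

section OffDiagonal

variable {ι R : Type*} [Fintype ι] [DecidableEq ι]

theorem sum_sum_erase_eq_two_mul_of_symm [NonAssocSemiring R] {H : ι → ι → R} (k : ι)
    (hsymm : ∀ m n, H m n = H n m) (hsupp : ∀ m n, m ≠ k → n ≠ k → H m n = 0) :
    ∑ m, ∑ n ∈ univ.erase m, H m n = 2 * ∑ n ∈ univ.erase k, H k n := by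
  have hrow : ∀ m ∈ univ.erase k, ∑ n ∈ univ.erase m, H m n = H k m := by
    intro m hm
    have hmk := ne_of_mem_erase hm
    rw [sum_eq_single_of_mem k (mem_erase.2 ⟨hmk.symm, mem_univ k⟩)
      fun n _ hnk => hsupp m n hmk hnk, hsymm]
  rw [← add_sum_erase _ _ (mem_univ k), sum_congr rfl hrow, two_mul]

theorem sum_sum_erase_sub_of_symm [Ring R] {F G : ι → ι → R} (k : ι)
    (hF : ∀ m n, F m n = F n m) (hG : ∀ m n, G m n = G n m)
    (hagree : ∀ m n, m ≠ k → n ≠ k → F m n = G m n) :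
    ∑ m, ∑ n ∈ univ.erase m, F m n - ∑ m, ∑ n ∈ univ.erase m, G m n
      = 2 * ∑ n ∈ univ.erase k, (F k n - G k n) := by
  simp only [← sum_sub_distrib]
  exact sum_sum_erase_eq_two_mul_of_symm k (fun m n => by rw [hF, hG])
    fun m n hm hn => sub_eq_zero.2 (hagree m n hm hn)

end OffDiagonal

section Profiles

variable {ι S : Type*} [DecidableEq S] [Zero S]

theorem sum_mul_ite_eq_zero_congr [Fintype ι] (c : ι → ℝ) {β β' : ι → S} {k : ι}
    (hagree : ∀ n, n ≠ k → β n = β' n) (hk : β k ≠ 0) (hk' : β' k ≠ 0) :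
    ∑ m, c m * (if β m = 0 then 1 else 0) = ∑ m, c m * (if β' m = 0 then 1 else 0) := by
  refine sum_congr rfl fun m _ => ?_
  by_cases hm : m = k
  · subst hm
    simp [hk, hk']
  · rw [hagree m hm]

variable [Preorder S] [DecidableLT S]

/-- The summand of the pairwise part of the potential `φ`. -/
def coChannel (w : ι → ℝ) (β : ι → S) (m n : ι) : ℝ :=
  w m * w n * (if β n = β m then 1 else 0) * (if 0 < β m then 1 else 0)

theorem coChannel_comm (w : ι → ℝ) (β : ι → S) (m n : ι) :
    coChannel w β m n = coChannel w β n m := by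
  unfold coChannel
  by_cases h : β n = β m
  · rw [if_pos h, if_pos h.symm, h]
    ring
  · rw [if_neg h, if_neg (Ne.symm h)]
    ring

theorem sum_coChannel_erase [Fintype ι] [DecidableEq ι] {w : ι → ℝ} {β : ι → S} {k : ι}
    (hk : 0 < β k) :
    ∑ n ∈ univ.erase k, coChannel w β k n
      = w k * ∑ n ∈ (univ.erase k).filter (fun n => β n = β k), w n := by
  rw [sum_filter, mul_sum]
  refine sum_congr rfl fun n _ => ?_
  split_ifs <;> simp [coChannel, *]

end Profiles

theorem potential_diff_offload_offload_general (K M : ℕ)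
    (w : Fin K → ℝ)
    (V : Fin K → ℝ)
    (Υ : Fin K → (Fin K → Fin (M + 1)) → ℝ)
    (hΥ : ∀ k α, Υ k α =
      ∑ n ∈ (Finset.univ.erase k).filter (fun n => α n = α k), w n)
    (φ : (Fin K → Fin (M + 1)) → ℝ)
    (hφ : ∀ α, φ α =
      (1 / 2) * ∑ k : Fin K, ∑ n ∈ Finset.univ.erase k,
          w k * w n * (if α n = α k then (1 : ℝ) else 0) * (if 0 < α k then (1 : ℝ) else 0)
      + ∑ k : Fin K, w k * V k * (if α k = 0 then (1 : ℝ) else 0))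
    (k : Fin K) (α α' : Fin K → Fin (M + 1))
    (hagree : ∀ n, n ≠ k → α n = α' n)
    (hk : 0 < α k) (hk' : 0 < α' k) :
    φ α - φ α' = w k * (Υ k α - Υ k α') := by
  have hpair := sum_sum_erase_sub_of_symm k (coChannel_comm w α) (coChannel_comm w α')
    fun m n hm hn => by simp only [coChannel, hagree m hm, hagree n hn]
  rw [sum_sub_distrib, sum_coChannel_erase hk, sum_coChannel_erase hk', ← hΥ, ← hΥ] at hpair
  unfold coChannel at hpair
  rw [hφ, hφ, sum_mul_ite_eq_zero_congr _ hagree hk.ne' hk'.ne']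
  linarith

/-- If two profiles differ only at user `k`, with `α k > 0` and `α' k > 0`,
then the change in the potential equals `w k` times the change in the interference of `k`. -/
theorem potential_diff_offload_offload (K M : ℕ) (p h : Fin K → ℝ)
    (hp : ∀ k, 0 < p k) (hh : ∀ k, 0 < h k)
    (w : Fin K → ℝ) (hw : ∀ k, w k = p k * h k)
    (V : Fin K → ℝ)
    (Υ : Fin K → (Fin K → Fin (M + 1)) → ℝ)
    (hΥ : ∀ k α, Υ k α =
      ∑ n ∈ (Finset.univ.erase k).filter (fun n => α n = α k), w n)
    (φ : (Fin K → Fin (M + 1)) → ℝ)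
    (hφ : ∀ α, φ α =
      (1 / 2) * ∑ k : Fin K, ∑ n ∈ Finset.univ.erase k,
          w k * w n * (if α n = α k then (1 : ℝ) else 0) * (if 0 < α k then (1 : ℝ) else 0)
      + ∑ k : Fin K, w k * V k * (if α k = 0 then (1 : ℝ) else 0))
    (k : Fin K) (α α' : Fin K → Fin (M + 1))
    (hagree : ∀ n, n ≠ k → α n = α' n)
    (hk : 0 < α k) (hk' : 0 < α' k) :
    φ α - φ α' = w k * (Υ k α - Υ k α') :=
  potential_diff_offload_offload_general K M w V Υ hΥ φ hφ k α α' hagree hk hk'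
end

section
/- Let α and α' be strategy profiles that agree at every coordinate n ≠ k, with α k > 0 and α' k = 0. Then φ α − φ α' = w k * (Υ k α − V k). -/
/-!
Only the terms of `φ` involving user `k` change. In the quadratic part these are the pairs
`(k, n)` and `(n, k)`, which contribute equally because the interaction is symmetric; together
with the factor `1/2` they give `w k * Υ k α` for `α` and nothing for `α'` (where `k` is local).
In the linear part only the term `w k * V k` of the local user `k` changes.
-/

open Finset

namespace Finset

variable {ι G : Type*} [Fintype ι] [DecidableEq ι] [AddCommGroup G]

theorem sum_sub_sum_of_eq_of_ne {f g : ι → G} (k : ι) (hfg : ∀ i, i ≠ k → f i = g i) :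
    ∑ i, f i - ∑ i, g i = f k - g k := by
  rw [← sum_erase_add _ _ (mem_univ k), ← sum_erase_add _ _ (mem_univ k),
    sum_congr rfl fun i hi => hfg i (ne_of_mem_erase hi)]
  abel

theorem sum_sum_erase_eq_two_nsmul_add {c : ι → ι → G} (hc : ∀ i n, c i n = c n i) (k : ι) :
    ∑ i, ∑ n ∈ univ.erase i, c i n =
      2 • ∑ n ∈ univ.erase k, c k n + ∑ i ∈ univ.erase k, ∑ n ∈ (univ.erase i).erase k, c i n := by
  have hsplit : ∀ i ∈ univ.erase k,
      ∑ n ∈ univ.erase i, c i n = c k i + ∑ n ∈ (univ.erase i).erase k, c i n := fun i hi => by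
    rw [← sum_erase_add _ _ (mem_erase.2 ⟨(ne_of_mem_erase hi).symm, mem_univ k⟩), hc, add_comm]
  rw [← sum_erase_add _ _ (mem_univ k), sum_congr rfl hsplit, sum_add_distrib, two_nsmul]
  abel

theorem sum_sum_erase_sub_of_eq_of_ne {c d : ι → ι → G} (hc : ∀ i n, c i n = c n i)
    (hd : ∀ i n, d i n = d n i) (k : ι) (hcd : ∀ i n, i ≠ k → n ≠ k → c i n = d i n) :
    ∑ i, ∑ n ∈ univ.erase i, c i n - ∑ i, ∑ n ∈ univ.erase i, d i n =
      2 • ∑ n ∈ univ.erase k, (c k n - d k n) := by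
  have hrest : ∀ i ∈ univ.erase k,
      ∑ n ∈ (univ.erase i).erase k, c i n = ∑ n ∈ (univ.erase i).erase k, d i n :=
    fun i hi => sum_congr rfl fun n hn => hcd i n (ne_of_mem_erase hi) (ne_of_mem_erase hn)
  rw [sum_sum_erase_eq_two_nsmul_add hc k, sum_sum_erase_eq_two_nsmul_add hd k,
    sum_congr rfl hrest, sum_sub_distrib, nsmul_sub]
  abel

end Finset

section Potential

variable {ι σ : Type*} [DecidableEq σ] [Preorder σ] [Zero σ] [DecidableLT σ]

def sharedChannelWeight (w : ι → ℝ) (α : ι → σ) (i n : ι) : ℝ :=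
  w i * w n * (if α n = α i then (1 : ℝ) else 0) * (if 0 < α i then (1 : ℝ) else 0)

theorem sharedChannelWeight_comm (w : ι → ℝ) (α : ι → σ) (i n : ι) :
    sharedChannelWeight w α i n = sharedChannelWeight w α n i := by
  unfold sharedChannelWeight
  by_cases h : α n = α i
  · rw [if_pos h, if_pos h.symm, h, mul_comm (w i)]
  · rw [if_neg h, if_neg (Ne.symm h)]
    ring

theorem sharedChannelWeight_of_pos (w : ι → ℝ) {α : ι → σ} {k : ι} (hk : 0 < α k) (n : ι) :
    sharedChannelWeight w α k n = w k * if α n = α k then w n else 0 := by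
  simp only [sharedChannelWeight, if_pos hk]
  split_ifs <;> ring

theorem sharedChannelWeight_of_eq_zero (w : ι → ℝ) {α : ι → σ} {k : ι} (hk : α k = 0) (n : ι) :
    sharedChannelWeight w α k n = 0 := by
  simp [sharedChannelWeight, hk]

theorem sum_sum_sharedChannelWeight_sub [Fintype ι] [DecidableEq ι] {w : ι → ℝ} {k : ι} {α α' : ι → σ}
    (hagree : ∀ n, n ≠ k → α n = α' n) (hk : 0 < α k) (hk' : α' k = 0) :
    ∑ i, ∑ n ∈ univ.erase i, sharedChannelWeight w α i n -
        ∑ i, ∑ n ∈ univ.erase i, sharedChannelWeight w α' i n =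
      2 * (w k * ∑ n ∈ (univ.erase k).filter (fun n => α n = α k), w n) := by
  have hoff : ∀ i n, i ≠ k → n ≠ k →
      sharedChannelWeight w α i n = sharedChannelWeight w α' i n := fun i n hi hn => by
    simp only [sharedChannelWeight, hagree i hi, hagree n hn]
  rw [sum_sum_erase_sub_of_eq_of_ne (sharedChannelWeight_comm w α)
    (sharedChannelWeight_comm w α') k hoff, nsmul_eq_mul, Nat.cast_ofNat, sum_filter]
  simp only [sharedChannelWeight_of_pos w hk, sharedChannelWeight_of_eq_zero w hk', sub_zero,
    mul_sum]

end Potential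

theorem potential_diff_offload_local_general (K M : ℕ)
    (w : Fin K → ℝ)
    (V : Fin K → ℝ)
    (Υ : Fin K → (Fin K → Fin (M + 1)) → ℝ)
    (hΥ : ∀ k α, Υ k α =
      ∑ n ∈ (Finset.univ.erase k).filter (fun n => α n = α k), w n)
    (φ : (Fin K → Fin (M + 1)) → ℝ)
    (hφ : ∀ α, φ α =
      (1 / 2) * ∑ k : Fin K, ∑ n ∈ Finset.univ.erase k,
          w k * w n * (if α n = α k then (1 : ℝ) else 0) * (if 0 < α k then (1 : ℝ) else 0)
      + ∑ k : Fin K, w k * V k * (if α k = 0 then (1 : ℝ) else 0))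
    (k : Fin K) (α α' : Fin K → Fin (M + 1))
    (hagree : ∀ n, n ≠ k → α n = α' n)
    (hk : 0 < α k) (hk' : α' k = 0) :
    φ α - φ α' = w k * (Υ k α - V k) := by
  have hquad := sum_sum_sharedChannelWeight_sub (w := w) hagree hk hk'
  have hlin : ∑ i, w i * V i * (if α i = 0 then (1 : ℝ) else 0) -
      ∑ i, w i * V i * (if α' i = 0 then (1 : ℝ) else 0) = -(w k * V k) := by
    rw [sum_sub_sum_of_eq_of_ne k fun i hi => by rw [hagree i hi], if_neg hk.ne', hk', if_pos rfl]
    ring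
  simp only [sharedChannelWeight] at hquad
  rw [hφ, hφ, hΥ]
  linear_combination (1 / 2 : ℝ) * hquad + hlin

/-- If two profiles differ only at user `k`, with `α k > 0` and `α' k = 0`,
then the change in the potential equals `w k` times `Υ k α - V k`. -/
theorem potential_diff_offload_local (K M : ℕ) (p h : Fin K → ℝ)
    (hp : ∀ k, 0 < p k) (hh : ∀ k, 0 < h k)
    (w : Fin K → ℝ) (hw : ∀ k, w k = p k * h k)
    (V : Fin K → ℝ)
    (Υ : Fin K → (Fin K → Fin (M + 1)) → ℝ)
    (hΥ : ∀ k α, Υ k α =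
      ∑ n ∈ (Finset.univ.erase k).filter (fun n => α n = α k), w n)
    (φ : (Fin K → Fin (M + 1)) → ℝ)
    (hφ : ∀ α, φ α =
      (1 / 2) * ∑ k : Fin K, ∑ n ∈ Finset.univ.erase k,
          w k * w n * (if α n = α k then (1 : ℝ) else 0) * (if 0 < α k then (1 : ℝ) else 0)
      + ∑ k : Fin K, w k * V k * (if α k = 0 then (1 : ℝ) else 0))
    (k : Fin K) (α α' : Fin K → Fin (M + 1))
    (hagree : ∀ n, n ≠ k → α n = α' n)
    (hk : 0 < α k) (hk' : α' k = 0) :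
    φ α - φ α' = w k * (Υ k α - V k) :=
  potential_diff_offload_local_general K M w V Υ hΥ φ hφ k α α' hagree hk hk'
end

section
/- Fix constants B, M, τ, ζ, σ² > 0, a user with transmit power p > 0 and channel gain h > 0 (write w = p * h), a task with input size I > 0, software size D > 0, computation load S > 0, and caching bit b ∈ {0,1}. For interference level x ≥ 0 let r x = (B / M) * log₂(1 + w / (x + σ²)), and let V = w / (2 ^ (p * τ² * M * (I + (1 − b) * D) / (B * ζ * S³)) − 1) − σ². Then the local-computing energy exceeds the offloading energy exactly below the threshold: for all Υ ≥ 0, ζ * S³ / τ² ≥ p * (I + (1 − b) * D) / r Υ if and only if Υ ≤ V. -/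
/-- Local-computing energy exceeds offloading energy exactly when the
interference is below the threshold `V`. -/
theorem offload_beneficial_iff_below_threshold (B M τ ζ σ2 p hg I D S b : ℝ)
    (hB : 0 < B) (hM : 0 < M) (hτ : 0 < τ) (hζ : 0 < ζ) (hσ : 0 < σ2)
    (hp : 0 < p) (hhg : 0 < hg) (hI : 0 < I) (hD : 0 < D) (hS : 0 < S)
    (hb : b = 0 ∨ b = 1)
    (w : ℝ) (hw : w = p * hg)
    (r : ℝ → ℝ)
    (hr : ∀ x, r x = (B / M) * Real.logb 2 (1 + w / (x + σ2)))
    (V : ℝ)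
    (hV : V = w / ((2 : ℝ) ^ (p * τ ^ 2 * M * (I + (1 - b) * D) / (B * ζ * S ^ 3)) - 1) - σ2) :
    ∀ Υ : ℝ, 0 ≤ Υ →
      (ζ * S ^ 3 / τ ^ 2 ≥ p * (I + (1 - b) * D) / r Υ ↔ Υ ≤ V) := by
  intro Υ hΥ
  have hwpos : 0 < w := hw ▸ mul_pos hp hhg
  have hK : 0 < I + (1 - b) * D := by rcases hb with h | h <;> subst h <;> nlinarith
  have hs : 0 < Υ + σ2 := by linarith
  have hfrac : 0 < w / (Υ + σ2) := div_pos hwpos hs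
  have hz : 1 < 1 + w / (Υ + σ2) := by linarith
  have hL : 0 < Real.logb 2 (1 + w / (Υ + σ2)) := Real.logb_pos one_lt_two hz
  have hrpos : 0 < r Υ := by
    rw [hr]; exact mul_pos (div_pos hB hM) hL
  set c := p * τ ^ 2 * M * (I + (1 - b) * D) / (B * ζ * S ^ 3) with hcdef
  have hc : 0 < c := by positivity
  have h2c : 1 < (2 : ℝ) ^ c := by
    rw [Real.one_lt_rpow_iff_of_pos (by norm_num)]
    exact Or.inl ⟨one_lt_two, hc⟩
  have h2cpos : 0 < (2 : ℝ) ^ c - 1 := by linarith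
  -- step 1: energy inequality ↔ c ≤ logb 2 (1 + w/(Υ+σ2))
  have step1 : (ζ * S ^ 3 / τ ^ 2 ≥ p * (I + (1 - b) * D) / r Υ) ↔
      c ≤ Real.logb 2 (1 + w / (Υ + σ2)) := by
    rw [hr, ge_iff_le, div_le_div_iff₀ (mul_pos (div_pos hB hM) hL) (by positivity), hcdef,
      div_le_iff₀ (by positivity), div_mul_eq_mul_div, mul_div_assoc',
      le_div_iff₀ hM]
    constructor <;> intro h <;> nlinarith [sq_nonneg τ, sq_nonneg S]
  rw [step1]
  -- step 2: c ≤ logb ↔ 2^c ≤ 1 + w/(Υ+σ2)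
  have step2 : c ≤ Real.logb 2 (1 + w / (Υ + σ2)) ↔
      (2 : ℝ) ^ c ≤ 1 + w / (Υ + σ2) := by
    rw [Real.le_logb_iff_rpow_le one_lt_two (by linarith)]
  rw [step2]
  -- step 3: arithmetic
  rw [hV]
  constructor
  · intro h
    have h' : (2 : ℝ) ^ c - 1 ≤ w / (Υ + σ2) := by linarith
    have h'' : ((2 : ℝ) ^ c - 1) * (Υ + σ2) ≤ w := by
      rwa [← le_div_iff₀ hs]
    have : Υ + σ2 ≤ w / ((2 : ℝ) ^ c - 1) := by
      rw [le_div_iff₀ h2cpos]; linarith [h'']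
    linarith
  · intro h
    have h' : Υ + σ2 ≤ w / ((2 : ℝ) ^ c - 1) := by linarith
    have h'' : ((2 : ℝ) ^ c - 1) * (Υ + σ2) ≤ w := by
      rw [mul_comm, ← le_div_iff₀ h2cpos]; exact h'
    have : (2 : ℝ) ^ c - 1 ≤ w / (Υ + σ2) := by
      rw [le_div_iff₀ hs]; linarith
    linarith
end

section
/- Let α and α' be strategy profiles that agree at every coordinate n ≠ k, with α k > 0 and α' k > 0. Then the sign of (φ α − φ α') equals the sign of (c k α − c k α'), where c k is the individual cost of user k. -/
/-!
The pairwise part of `φ` is the potential of a weighted congestion game: when user `k` moves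
between two channels, only the terms pairing `k` with another user change, and each appears twice,
so `φ` changes by exactly `w k` times the change of `k`'s interference `Υ k`; the local-computing
part does not change at all. The offloading cost `p k (I k + (1 - b k) D k) / r k` is strictly
increasing in `Υ k`, because the rate `r k` is strictly decreasing and positive.
-/

open Finset

namespace Real

theorem sign_congr {x y : ℝ} (hneg : x < 0 ↔ y < 0) (hpos : 0 < x ↔ 0 < y) :
    sign x = sign y := by
  simp only [sign, hneg, hpos]

theorem sign_mul_of_pos {a x : ℝ} (ha : 0 < a) : sign (a * x) = sign x :=
  sign_congr (by rw [mul_neg_iff]; simp [ha, ha.not_gt]) (mul_pos_iff_of_pos_left ha)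

theorem _root_.StrictMonoOn.sign_sub {f : ℝ → ℝ} {s : Set ℝ} (hf : StrictMonoOn f s) {x y : ℝ}
    (hx : x ∈ s) (hy : y ∈ s) : sign (f x - f y) = sign (x - y) :=
  sign_congr (by simp only [sub_neg, hf.lt_iff_lt hx hy])
    (by simp only [sub_pos, hf.lt_iff_lt hy hx])

end Real

theorem Finset.sum_sum_erase_eq_two_nsmul {ι M : Type*} [Fintype ι] [DecidableEq ι]
    [AddCommMonoid M] (H : ι → ι → M) (hsymm : ∀ i j, H i j = H j i) (k : ι)
    (hzero : ∀ i j, i ≠ k → j ≠ k → H i j = 0) :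
    ∑ i, ∑ j ∈ univ.erase i, H i j = 2 • ∑ j ∈ univ.erase k, H k j := by
  have hrow : ∀ i ∈ univ.erase k, ∑ j ∈ univ.erase i, H i j = H k i := fun i hi => by
    have hik := ne_of_mem_erase hi
    rw [sum_eq_single_of_mem k (mem_erase.mpr ⟨hik.symm, mem_univ k⟩)
      fun j _ hjk => hzero i j hik hjk, hsymm]
  rw [← add_sum_erase _ _ (mem_univ k), sum_congr rfl hrow, two_nsmul]

theorem strictMonoOn_div_mul_logb {A C w σ : ℝ} (hA : 0 < A) (hC : 0 < C) (hw : 0 < w) :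
    StrictMonoOn (fun x => A / (C * Real.logb 2 (1 + w / (x + σ)))) (Set.Ioi (-σ)) := by
  intro x hx y hy hxy
  have hxσ : 0 < x + σ := neg_lt_iff_pos_add.mp hx
  have hyσ : 0 < y + σ := neg_lt_iff_pos_add.mp hy
  have hlog_pos : 0 < Real.logb 2 (1 + w / (y + σ)) :=
    Real.logb_pos one_lt_two (lt_add_of_pos_right 1 (div_pos hw hyσ))
  have hlog_lt : Real.logb 2 (1 + w / (y + σ)) < Real.logb 2 (1 + w / (x + σ)) :=
    Real.logb_lt_logb one_lt_two (by positivity)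
      (add_lt_add_right (div_lt_div_of_pos_left hw hxσ (by linarith)) 1)
  exact div_lt_div_of_pos_left hA (mul_pos hC hlog_pos) (mul_lt_mul_of_pos_left hlog_lt hC)

namespace Offloading

variable {ι β : Type*} [DecidableEq β] [Preorder β] [Zero β] [DecidableLT β]

def pairPotential (w : ι → ℝ) (α : ι → β) (i j : ι) : ℝ :=
  w i * w j * (if α j = α i then (1 : ℝ) else 0) * (if 0 < α i then (1 : ℝ) else 0)

theorem pairPotential_comm (w : ι → ℝ) (α : ι → β) (i j : ι) :
    pairPotential w α i j = pairPotential w α j i := by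
  unfold pairPotential
  by_cases h : α j = α i
  · simp [h, mul_comm (w i)]
  · simp [h, Ne.symm h]

variable [Fintype ι] [DecidableEq ι]

def interference (w : ι → ℝ) (k : ι) (α : ι → β) : ℝ :=
  ∑ n ∈ (univ.erase k).filter (fun n => α n = α k), w n

noncomputable def potential (w V : ι → ℝ) (α : ι → β) : ℝ :=
  (1 / 2) * ∑ i, ∑ j ∈ univ.erase i, pairPotential w α i j
    + ∑ i, w i * V i * (if α i = 0 then (1 : ℝ) else 0)

theorem interference_eq_sum_pairPotential (w : ι → ℝ) {k : ι} {α : ι → β} (hk : 0 < α k) :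
    w k * interference w k α = ∑ j ∈ univ.erase k, pairPotential w α k j := by
  simp only [interference, pairPotential, sum_filter, mul_sum, if_pos hk]
  refine sum_congr rfl fun j _ => ?_
  split_ifs <;> ring

theorem potential_sub_potential (w V : ι → ℝ) {k : ι} {α α' : ι → β}
    (hagree : ∀ n, n ≠ k → α n = α' n) (hk : 0 < α k) (hk' : 0 < α' k) :
    potential w V α - potential w V α' = w k * (interference w k α - interference w k α') := by
  have hlocal : ∀ i, (if α i = 0 then (1 : ℝ) else 0) = if α' i = 0 then 1 else 0 := fun i => by
    by_cases hik : i = k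
    · subst hik; rw [if_neg hk.ne', if_neg hk'.ne']
    · rw [hagree i hik]
  have hpair := sum_sum_erase_eq_two_nsmul
    (fun i j => pairPotential w α i j - pairPotential w α' i j)
    (fun i j => by simp only [pairPotential_comm w _ i j]) k
    (fun i j hi hj => by simp only [pairPotential, hagree i hi, hagree j hj, sub_self])
  simp only [sum_sub_distrib, two_nsmul] at hpair
  simp only [potential, hlocal, mul_sub, interference_eq_sum_pairPotential w hk,
    interference_eq_sum_pairPotential w hk']
  linear_combination (1 / 2 : ℝ) * hpair

end Offloading

theorem ordinal_potential_offload_offload_general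
    (K M : ℕ) (B σ2 : ℝ)
    (hB : 0 < B) (hσ : 0 < σ2)
    (p h I D : Fin K → ℝ)
    (hp : ∀ k, 0 < p k) (hh : ∀ k, 0 < h k) (hI : ∀ k, 0 < I k)
    (hD : ∀ k, 0 < D k)
    (b : Fin K → ℝ) (hb : ∀ k, b k = 0 ∨ b k = 1)
    (w : Fin K → ℝ) (hw : ∀ k, w k = p k * h k)
    (Υ : Fin K → (Fin K → Fin (M + 1)) → ℝ)
    (hΥ : ∀ k α, Υ k α =
      ∑ n ∈ (Finset.univ.erase k).filter (fun n => α n = α k), w n)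
    (r : Fin K → (Fin K → Fin (M + 1)) → ℝ)
    (hr : ∀ k α, r k α = (B / (M : ℝ)) * Real.logb 2 (1 + w k / (Υ k α + σ2)))
    (EL : Fin K → ℝ)
    (EO : Fin K → (Fin K → Fin (M + 1)) → ℝ)
    (hEO : ∀ k α, EO k α = p k * (I k + (1 - b k) * D k) / r k α)
    (c : Fin K → (Fin K → Fin (M + 1)) → ℝ)
    (hc : ∀ k α, c k α = if α k = 0 then EL k else EO k α)
    (V : Fin K → ℝ)
    (φ : (Fin K → Fin (M + 1)) → ℝ)
    (hφ : ∀ α, φ α =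
      (1 / 2) * ∑ k : Fin K, ∑ n ∈ Finset.univ.erase k,
          w k * w n * (if α n = α k then (1 : ℝ) else 0) * (if 0 < α k then (1 : ℝ) else 0)
      + ∑ k : Fin K, w k * V k * (if α k = 0 then (1 : ℝ) else 0))
    (k : Fin K) (α α' : Fin K → Fin (M + 1))
    (hagree : ∀ n, n ≠ k → α n = α' n)
    (hk : 0 < α k) (hk' : 0 < α' k) :
    Real.sign (φ α - φ α') = Real.sign (c k α - c k α') := by
  have hw_pos : ∀ n, 0 < w n := fun n => hw n ▸ mul_pos (hp n) (hh n)
  have hM : (0 : ℝ) < M :=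
    Nat.cast_pos.mpr ((Fin.lt_def.mp hk).trans_le (Nat.le_of_lt_succ (α k).isLt))
  have hload : 0 < p k * (I k + (1 - b k) * D k) := by
    have hb' : 0 ≤ 1 - b k := by rcases hb k with h0 | h0 <;> simp [h0]
    exact mul_pos (hp k) (add_pos_of_pos_of_nonneg (hI k) (mul_nonneg hb' (hD k).le))
  have hΥ_mem : ∀ β, Υ k β ∈ Set.Ioi (-σ2) := fun β => by
    rw [hΥ, Set.mem_Ioi]
    exact (neg_neg_of_pos hσ).trans_le (sum_nonneg fun n _ => (hw_pos n).le)
  have hcost : ∀ β : Fin K → Fin (M + 1), 0 < β k → c k β =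
      p k * (I k + (1 - b k) * D k) / (B / M * Real.logb 2 (1 + w k / (Υ k β + σ2))) :=
    fun β hβ => by rw [hc, if_neg hβ.ne', hEO, hr]
  have hφ_sub : φ α - φ α' = w k * (Υ k α - Υ k α') := by
    rw [hφ, hφ, hΥ, hΥ]
    exact Offloading.potential_sub_potential w V hagree hk hk'
  rw [hφ_sub, Real.sign_mul_of_pos (hw_pos k), hcost α hk, hcost α' hk',
    (strictMonoOn_div_mul_logb hload (div_pos hB hM) (hw_pos k)).sign_sub
      (hΥ_mem α) (hΥ_mem α')]

/-- For a unilateral deviation of user `k` between two offloading actions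
(`α k > 0` and `α' k > 0`), the sign of the potential change equals the sign of the
change in the individual cost of user `k`. -/
theorem ordinal_potential_offload_offload
    (K M : ℕ) (B σ2 τ ζ : ℝ)
    (hB : 0 < B) (hσ : 0 < σ2) (hτ : 0 < τ) (hζ : 0 < ζ)
    (p h I D S : Fin K → ℝ)
    (hp : ∀ k, 0 < p k) (hh : ∀ k, 0 < h k) (hI : ∀ k, 0 < I k)
    (hD : ∀ k, 0 < D k) (hS : ∀ k, 0 < S k)
    (b : Fin K → ℝ) (hb : ∀ k, b k = 0 ∨ b k = 1)
    (w : Fin K → ℝ) (hw : ∀ k, w k = p k * h k)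
    (Υ : Fin K → (Fin K → Fin (M + 1)) → ℝ)
    (hΥ : ∀ k α, Υ k α =
      ∑ n ∈ (Finset.univ.erase k).filter (fun n => α n = α k), w n)
    (r : Fin K → (Fin K → Fin (M + 1)) → ℝ)
    (hr : ∀ k α, r k α = (B / (M : ℝ)) * Real.logb 2 (1 + w k / (Υ k α + σ2)))
    (EL : Fin K → ℝ) (hEL : ∀ k, EL k = ζ * S k ^ 3 / τ ^ 2)
    (EO : Fin K → (Fin K → Fin (M + 1)) → ℝ)
    (hEO : ∀ k α, EO k α = p k * (I k + (1 - b k) * D k) / r k α)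
    (c : Fin K → (Fin K → Fin (M + 1)) → ℝ)
    (hc : ∀ k α, c k α = if α k = 0 then EL k else EO k α)
    (V : Fin K → ℝ)
    (hV : ∀ k, V k = w k /
        ((2 : ℝ) ^ (p k * τ ^ 2 * (M : ℝ) * (I k + (1 - b k) * D k) / (B * ζ * S k ^ 3)) - 1)
      - σ2)
    (φ : (Fin K → Fin (M + 1)) → ℝ)
    (hφ : ∀ α, φ α =
      (1 / 2) * ∑ k : Fin K, ∑ n ∈ Finset.univ.erase k,
          w k * w n * (if α n = α k then (1 : ℝ) else 0) * (if 0 < α k then (1 : ℝ) else 0)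
      + ∑ k : Fin K, w k * V k * (if α k = 0 then (1 : ℝ) else 0))
    (k : Fin K) (α α' : Fin K → Fin (M + 1))
    (hagree : ∀ n, n ≠ k → α n = α' n)
    (hk : 0 < α k) (hk' : 0 < α' k) :
    Real.sign (φ α - φ α') = Real.sign (c k α - c k α') :=
  ordinal_potential_offload_offload_general K M B σ2 hB hσ p h I D hp hh hI hD b hb w hw Υ hΥ r hr
    EL EO hEO c hc V φ hφ k α α' hagree hk hk'
end

section
/- Let α and α' be strategy profiles that agree at every coordinate n ≠ k, with α k > 0 and α' k = 0. Then the sign of (φ α − φ α') equals the sign of (c k α − c k α'), where c k is the individual cost of user k (so c k α is the offloading energy of user k and c k α' is its local-computing energy). -/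
/-!
Only the terms of the potential involving user `k` change, so `φ α - φ α' = w k * (Υ k α - V k)`.
On the cost side, `E_O k α = g (Υ k α)` for the strictly increasing function
`g x = P / ((B / M) * log₂ (1 + w k / (x + σ²)))` with `P = p k * (I k + (1 - b k) * D k)`, and
`V k` is the interference at which offloading costs exactly `E_L k`, i.e. `E_L k = g (V k)`.
Both differences therefore have the sign of `Υ k α - V k`.
-/

open Finset Real

theorem StrictMonoOn.sign_sub_s6 {f : ℝ → ℝ} {s : Set ℝ} (hf : StrictMonoOn f s) {x y : ℝ}
    (hx : x ∈ s) (hy : y ∈ s) : Real.sign (f x - f y) = Real.sign (x - y) := by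
  rcases lt_trichotomy x y with hxy | rfl | hxy
  · rw [sign_of_neg (sub_neg.2 (hf hx hy hxy)), sign_of_neg (sub_neg.2 hxy)]
  · simp
  · rw [sign_of_pos (sub_pos.2 (hf hy hx hxy)), sign_of_pos (sub_pos.2 hxy)]

theorem Real.sign_mul_of_pos_s6 {a : ℝ} (ha : 0 < a) (x : ℝ) : Real.sign (a * x) = Real.sign x := by
  simpa [mul_sub] using (strictMono_mul_left_of_pos ha).strictMonoOn Set.univ |>.sign_sub
    (Set.mem_univ x) (Set.mem_univ 0)

theorem Finset.sum_offDiag_sub_of_eq_off {ι : Type*} [Fintype ι] [DecidableEq ι]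
    (F G : ι → ι → ℝ) (k : ι) (hFG : ∀ i n, i ≠ k → n ≠ k → F i n = G i n) :
    ∑ i, ∑ n ∈ univ.erase i, F i n - ∑ i, ∑ n ∈ univ.erase i, G i n =
      ∑ n ∈ univ.erase k, (F k n - G k n) + ∑ i ∈ univ.erase k, (F i k - G i k) := by
  simp_rw [← sum_sub_distrib]
  rw [← add_sum_erase _ _ (mem_univ k)]
  congr 1
  refine sum_congr rfl fun i hi => ?_
  have hik := ne_of_mem_erase hi
  rw [sum_eq_single_of_mem k (mem_erase.2 ⟨hik.symm, mem_univ k⟩)]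
  intro n _ hnk
  rw [hFG i n hik hnk, sub_self]

theorem Finset.sum_sub_sum_of_eq_off {ι : Type*} [Fintype ι] (f g : ι → ℝ) (k : ι)
    (hfg : ∀ i, i ≠ k → f i = g i) : ∑ i, f i - ∑ i, g i = f k - g k := by
  rw [← sum_sub_distrib, sum_eq_single_of_mem k (mem_univ k)]
  intro i _ hik
  rw [hfg i hik, sub_self]

theorem sum_sameActiveChannel_sub_of_switch_off {ι β : Type*} [Fintype ι] [DecidableEq ι]
    [Preorder β] [Zero β] [DecidableEq β] [DecidableLT β] (w : ι → ℝ) (α α' : ι → β) (k : ι)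
    (hagree : ∀ n, n ≠ k → α n = α' n) (hk : 0 < α k) (hk' : α' k = 0) :
    ∑ i, ∑ n ∈ univ.erase i,
        w i * w n * (if α n = α i then (1 : ℝ) else 0) * (if 0 < α i then (1 : ℝ) else 0) -
      ∑ i, ∑ n ∈ univ.erase i,
        w i * w n * (if α' n = α' i then (1 : ℝ) else 0) * (if 0 < α' i then (1 : ℝ) else 0) =
      2 * (w k * ∑ n ∈ (univ.erase k).filter (fun n => α n = α k), w n) := by
  rw [sum_offDiag_sub_of_eq_off _ _ k fun i n hi hn => by rw [hagree i hi, hagree n hn]]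
  have hrow : ∀ n ∈ univ.erase k,
      w k * w n * (if α n = α k then (1 : ℝ) else 0) * (if 0 < α k then (1 : ℝ) else 0) -
        w k * w n * (if α' n = α' k then (1 : ℝ) else 0) * (if 0 < α' k then (1 : ℝ) else 0) =
      w k * if α n = α k then w n else 0 := by
    intro n _
    simp only [hk, hk', lt_irrefl, if_true, if_false]
    split_ifs <;> ring
  have hcol : ∀ i ∈ univ.erase k,
      w i * w k * (if α k = α i then (1 : ℝ) else 0) * (if 0 < α i then (1 : ℝ) else 0) -
        w i * w k * (if α' k = α' i then (1 : ℝ) else 0) * (if 0 < α' i then (1 : ℝ) else 0) =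
      w k * if α i = α k then w i else 0 := by
    intro i hi
    rw [hk', ← hagree i (ne_of_mem_erase hi)]
    by_cases hik : α i = α k
    · simp [hik, hk, hk.ne, mul_comm]
    by_cases hi0 : 0 < α i
    · simp [Ne.symm hik, hik, hi0.ne]
    · simp [hik, hi0]
  rw [sum_congr rfl hrow, sum_congr rfl hcol, ← mul_sum, sum_filter]
  ring

theorem strictMonoOn_div_mul_logb_one_add_div {P a w σ2 : ℝ} (hP : 0 < P) (ha : 0 < a)
    (hw : 0 < w) :
    StrictMonoOn (fun x => P / (a * logb 2 (1 + w / (x + σ2)))) (Set.Ioi (-σ2)) := by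
  intro x hx y hy hxy
  have hx' : 0 < x + σ2 := neg_lt_iff_pos_add.1 hx
  have hy' : 0 < y + σ2 := neg_lt_iff_pos_add.1 hy
  have hdiv : w / (y + σ2) < w / (x + σ2) := div_lt_div_of_pos_left hw hx' (by linarith)
  have hlog_pos : 0 < logb 2 (1 + w / (y + σ2)) :=
    logb_pos one_lt_two (lt_add_of_pos_right 1 (div_pos hw hy'))
  have hlog : logb 2 (1 + w / (y + σ2)) < logb 2 (1 + w / (x + σ2)) :=
    logb_lt_logb one_lt_two (by positivity) (by linarith)
  exact div_lt_div_of_pos_left hP (mul_pos ha hlog_pos) (mul_lt_mul_of_pos_left hlog ha)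

theorem logb_two_one_add_div_div_rpow_sub_one {w : ℝ} (hw : w ≠ 0) (A : ℝ) :
    logb 2 (1 + w / (w / ((2 : ℝ) ^ A - 1))) = A := by
  rw [div_div_cancel₀ hw, add_sub_cancel, logb_rpow two_pos (by norm_num)]

theorem offloadingEnergy_at_threshold_eq_localEnergy {p Q B M τ ζ S w σ2 : ℝ} (hp : p ≠ 0)
    (hQ : Q ≠ 0) (hB : B ≠ 0) (hM : M ≠ 0) (hζ : ζ ≠ 0) (hS : S ≠ 0) (hw : w ≠ 0) :
    p * Q / (B / M * logb 2
        (1 + w / (w / (2 ^ (p * τ ^ 2 * M * Q / (B * ζ * S ^ 3)) - 1) - σ2 + σ2))) =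
      ζ * S ^ 3 / τ ^ 2 := by
  rw [sub_add_cancel, logb_two_one_add_div_div_rpow_sub_one hw]
  field_simp

/-- For a unilateral deviation of user `k` from offloading (`α k > 0`) to
local computing (`α' k = 0`), the sign of the potential change equals the sign of the
change in the individual cost of user `k`. -/
theorem ordinal_potential_offload_local
    (K M : ℕ) (B σ2 τ ζ : ℝ)
    (hB : 0 < B) (hσ : 0 < σ2) (hτ : 0 < τ) (hζ : 0 < ζ)
    (p h I D S : Fin K → ℝ)
    (hp : ∀ k, 0 < p k) (hh : ∀ k, 0 < h k) (hI : ∀ k, 0 < I k)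
    (hD : ∀ k, 0 < D k) (hS : ∀ k, 0 < S k)
    (b : Fin K → ℝ) (hb : ∀ k, b k = 0 ∨ b k = 1)
    (w : Fin K → ℝ) (hw : ∀ k, w k = p k * h k)
    (Υ : Fin K → (Fin K → Fin (M + 1)) → ℝ)
    (hΥ : ∀ k α, Υ k α =
      ∑ n ∈ (Finset.univ.erase k).filter (fun n => α n = α k), w n)
    (r : Fin K → (Fin K → Fin (M + 1)) → ℝ)
    (hr : ∀ k α, r k α = (B / (M : ℝ)) * Real.logb 2 (1 + w k / (Υ k α + σ2)))
    (EL : Fin K → ℝ) (hEL : ∀ k, EL k = ζ * S k ^ 3 / τ ^ 2)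
    (EO : Fin K → (Fin K → Fin (M + 1)) → ℝ)
    (hEO : ∀ k α, EO k α = p k * (I k + (1 - b k) * D k) / r k α)
    (c : Fin K → (Fin K → Fin (M + 1)) → ℝ)
    (hc : ∀ k α, c k α = if α k = 0 then EL k else EO k α)
    (V : Fin K → ℝ)
    (hV : ∀ k, V k = w k /
        ((2 : ℝ) ^ (p k * τ ^ 2 * (M : ℝ) * (I k + (1 - b k) * D k) / (B * ζ * S k ^ 3)) - 1)
      - σ2)
    (φ : (Fin K → Fin (M + 1)) → ℝ)
    (hφ : ∀ α, φ α =
      (1 / 2) * ∑ k : Fin K, ∑ n ∈ Finset.univ.erase k,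
          w k * w n * (if α n = α k then (1 : ℝ) else 0) * (if 0 < α k then (1 : ℝ) else 0)
      + ∑ k : Fin K, w k * V k * (if α k = 0 then (1 : ℝ) else 0))
    (k : Fin K) (α α' : Fin K → Fin (M + 1))
    (hagree : ∀ n, n ≠ k → α n = α' n)
    (hk : 0 < α k) (hk' : α' k = 0) :
    Real.sign (φ α - φ α') = Real.sign (c k α - c k α') := by
  have hw_pos : ∀ n, 0 < w n := fun n => hw n ▸ mul_pos (hp n) (hh n)
  have hwk := hw_pos k
  have hM : (0 : ℝ) < M :=
    Nat.cast_pos.2 <| (Fin.lt_def.1 hk).trans_le (Nat.lt_succ_iff.1 (α k).isLt)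
  set Q := I k + (1 - b k) * D k
  have hQ : 0 < Q := by
    rcases hb k with hb | hb <;> simp only [Q, hb] <;> linarith [hI k, hD k]
  have hpk := hp k
  have hSk := hS k
  have hA : 0 < p k * τ ^ 2 * (M : ℝ) * Q / (B * ζ * S k ^ 3) := by positivity
  set g : ℝ → ℝ := fun x => p k * Q / (B / M * logb 2 (1 + w k / (x + σ2)))
  have hg_mono : StrictMonoOn g (Set.Ioi (-σ2)) :=
    strictMonoOn_div_mul_logb_one_add_div (by positivity) (div_pos hB hM) hwk
  have hpot : φ α - φ α' = w k * (Υ k α - V k) := by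
    rw [hφ, hφ, add_sub_add_comm, ← mul_sub,
      sum_sameActiveChannel_sub_of_switch_off w α α' k hagree hk hk',
      sum_sub_sum_of_eq_off _ _ k fun i hi => by rw [hagree i hi], ← hΥ, if_neg hk.ne', if_pos hk']
    ring
  have hcost : c k α - c k α' = g (Υ k α) - g (V k) := by
    rw [hc, hc, if_neg hk.ne', if_pos hk', hEO, hr, hEL, hV,
      ← offloadingEnergy_at_threshold_eq_localEnergy hpk.ne' hQ.ne' hB.ne' hM.ne' hζ.ne' hSk.ne'
        hwk.ne']
  have hΥ_mem : Υ k α ∈ Set.Ioi (-σ2) := by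
    rw [hΥ]
    exact neg_lt_zero.2 hσ |>.trans_le <| sum_nonneg fun n _ => (hw_pos n).le
  have hV_mem : V k ∈ Set.Ioi (-σ2) := by
    rw [hV, Set.mem_Ioi, neg_lt_sub_iff_lt_add]
    exact lt_add_of_pos_right σ2 (div_pos hwk (sub_pos.2 (one_lt_rpow one_lt_two hA)))
  rw [hpot, hcost, sign_mul_of_pos_s6 hwk, hg_mono.sign_sub_s6 hΥ_mem hV_mem]
end

section
/- The computation offloading game possesses a pure Nash equilibrium: there exists a strategy profile α* such that for every user k and every alternative action a : Fin (M+1), c k α* ≤ c k (α* with its k-th coordinate replaced by a). -/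
/-!
Local computing at energy `E` is priced exactly like offloading against the threshold interference
`V k`, at which the offloading energy equals `E`. Hence every user's cost is a strictly increasing
function of its *effective interference* (`V k` if it computes locally, its co-channel interference
otherwise), and the potential `φ` changes under a unilateral move of user `k` by `w k` times the
change of that user's effective interference. So `φ` is a generalized ordinal potential, and any
minimizer of `φ` over the finitely many profiles is a pure Nash equilibrium.
-/

open Finset Function Set

section PotentialGame

variable {ι : Type*} [DecidableEq ι] {A : ι → Type*}

def IsPureNashEquilibrium {β : Type*} [LE β] (c : ι → (∀ i, A i) → β) (α : ∀ i, A i) : Prop :=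
  ∀ k a, c k α ≤ c k (update α k a)

def IsGeneralizedOrdinalPotential {β γ : Type*} [LT β] [LT γ] (c : ι → (∀ i, A i) → β)
    (Φ : (∀ i, A i) → γ) : Prop :=
  ∀ α k a, c k (update α k a) < c k α → Φ (update α k a) < Φ α

def IsWeightedPotential (c : ι → (∀ i, A i) → ℝ) (Φ : (∀ i, A i) → ℝ) (w : ι → ℝ) : Prop :=
  ∀ α k a, Φ (update α k a) - Φ α = w k * (c k (update α k a) - c k α)

theorem IsWeightedPotential.isGeneralizedOrdinalPotential {c : ι → (∀ i, A i) → ℝ}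
    {Φ : (∀ i, A i) → ℝ} {w : ι → ℝ} (h : IsWeightedPotential c Φ w) (hw : ∀ k, 0 < w k) :
    IsGeneralizedOrdinalPotential c Φ := fun α k a hlt =>
  sub_neg.1 <| h α k a ▸ mul_neg_of_pos_of_neg (hw k) (sub_neg.2 hlt)

theorem IsGeneralizedOrdinalPotential.comp_strictMonoOn {β β' γ : Type*} [LinearOrder β]
    [Preorder β'] [LT γ] {ψ : ι → (∀ i, A i) → β} {c : ι → (∀ i, A i) → β'}
    {Φ : (∀ i, A i) → γ} {G : ι → β → β'} {s : ι → Set β}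
    (h : IsGeneralizedOrdinalPotential ψ Φ) (hG : ∀ k, StrictMonoOn (G k) (s k))
    (hs : ∀ k α, ψ k α ∈ s k) (hc : ∀ k α, c k α = G k (ψ k α)) :
    IsGeneralizedOrdinalPotential c Φ := fun α k a hlt =>
  h α k a <| ((hG k).lt_iff_lt (hs _ _) (hs _ _)).1 (by rwa [hc, hc] at hlt)

theorem IsGeneralizedOrdinalPotential.isPureNashEquilibrium_of_forall_le {β γ : Type*}
    [LinearOrder β] [LinearOrder γ] {c : ι → (∀ i, A i) → β} {Φ : (∀ i, A i) → γ}
    (h : IsGeneralizedOrdinalPotential c Φ) {α : ∀ i, A i} (hα : ∀ α', Φ α ≤ Φ α') :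
    IsPureNashEquilibrium c α := fun k a =>
  not_lt.1 fun hlt => (h α k a hlt).not_ge (hα _)

theorem IsGeneralizedOrdinalPotential.exists_isPureNashEquilibrium {β γ : Type*}
    [LinearOrder β] [LinearOrder γ] [Finite (∀ i, A i)] [Nonempty (∀ i, A i)]
    {c : ι → (∀ i, A i) → β} {Φ : (∀ i, A i) → γ} (h : IsGeneralizedOrdinalPotential c Φ) :
    ∃ α, IsPureNashEquilibrium c α :=
  let ⟨α, hα⟩ := Finite.exists_min Φ
  ⟨α, h.isPureNashEquilibrium_of_forall_le hα⟩

end PotentialGame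

section OffloadingPotential

variable {ι A : Type*} [Fintype ι] [DecidableEq ι] [DecidableEq A]

theorem sum_sum_erase_eq_of_symm {M : Type*} [AddCommMonoid M] {f : ι → ι → M}
    (hf : ∀ i j, f i j = f j i) (k : ι) :
    ∑ i, ∑ j ∈ univ.erase i, f i j =
      2 • ∑ j ∈ univ.erase k, f k j + ∑ i ∈ univ.erase k, ∑ j ∈ (univ.erase i).erase k, f i j := by
  have hsplit : ∀ i ∈ univ.erase k,
      ∑ j ∈ univ.erase i, f i j = f k i + ∑ j ∈ (univ.erase i).erase k, f i j := fun i hi => by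
    rw [← hf, add_sum_erase _ _ (mem_erase.2 ⟨(ne_of_mem_erase hi).symm, mem_univ k⟩)]
  rw [← add_sum_erase _ _ (mem_univ k), sum_congr rfl hsplit, sum_add_distrib, two_nsmul,
    add_assoc]

noncomputable def interference (w : ι → ℝ) (k : ι) (α : ι → A) : ℝ :=
  ∑ n ∈ (univ.erase k).filter (fun n => α n = α k), w n

noncomputable def effectiveInterference (w V : ι → ℝ) (o : A) (k : ι) (α : ι → A) : ℝ :=
  if α k = o then V k else interference w k α

theorem neg_lt_effectiveInterference {w V : ι → ℝ} {σ : ℝ} (hw : ∀ n, 0 ≤ w n) (hσ : 0 < σ)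
    {o : A} {k : ι} (hV : -σ < V k) (α : ι → A) : -σ < effectiveInterference w V o k α := by
  rw [effectiveInterference]
  split_ifs
  · exact hV
  · exact (neg_neg_of_pos hσ).trans_le (sum_nonneg fun n _ => hw n)

noncomputable def offloadingPotential (w V : ι → ℝ) (o : A) (α : ι → A) : ℝ :=
  (1 / 2) * ∑ k, ∑ n ∈ univ.erase k,
      w k * w n * (if α n = α k then (1 : ℝ) else 0) * (if α k ≠ o then (1 : ℝ) else 0)
    + ∑ k, w k * V k * (if α k = o then (1 : ℝ) else 0)

theorem isWeightedPotential_offloadingPotential (w V : ι → ℝ) (o : A) :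
    IsWeightedPotential (effectiveInterference w V o) (offloadingPotential w V o) w := by
  intro α k a
  set f : (ι → A) → ι → ι → ℝ := fun β i n =>
    w i * w n * (if β n = β i then (1 : ℝ) else 0) * (if β i ≠ o then (1 : ℝ) else 0) with hf
  have hsymm : ∀ β i n, f β i n = f β n i := fun β i n => by
    simp only [hf]
    by_cases h : β n = β i
    · rw [h]; ring
    · rw [if_neg h, if_neg (Ne.symm h)]; ring
  have hrow : ∀ β, ∑ n ∈ univ.erase k, f β k n =
      w k * interference w k β * (if β k ≠ o then (1 : ℝ) else 0) := fun β => by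
    rw [interference, sum_filter, mul_sum, sum_mul]
    refine sum_congr rfl fun n _ => ?_
    simp only [hf]
    split_ifs <;> ring
  -- The pairs through `k` contribute `2 * w k * interference w k β`; the others ignore `β k`.
  have hdecomp : ∀ β, offloadingPotential w V o β = w k * effectiveInterference w V o k β +
      ((1 / 2) * ∑ i ∈ univ.erase k, ∑ n ∈ (univ.erase i).erase k, f β i n
        + ∑ i ∈ univ.erase k, w i * V i * (if β i = o then (1 : ℝ) else 0)) := fun β => by
    rw [offloadingPotential, sum_sum_erase_eq_of_symm (hsymm β) k, hrow,
      ← add_sum_erase _ _ (mem_univ k), effectiveInterference]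
    by_cases hk : β k = o
    · simp only [hk, ne_eq, not_true_eq_false, if_true, if_false]; ring
    · simp only [hk, ne_eq, not_false_eq_true, if_true, if_false]; ring
  have hfix : ∀ i ≠ k, update α k a i = α i := fun i hi => update_of_ne hi a α
  have hpairs : ∀ i ∈ univ.erase k, ∀ n ∈ (univ.erase i).erase k,
      f (update α k a) i n = f α i n := fun i hi n hn => by
    simp only [hf, hfix i (ne_of_mem_erase hi), hfix n (ne_of_mem_erase hn)]
  have hlocal : ∀ i ∈ univ.erase k, w i * V i * (if update α k a i = o then (1 : ℝ) else 0) =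
      w i * V i * (if α i = o then (1 : ℝ) else 0) := fun i hi => by
    rw [hfix i (ne_of_mem_erase hi)]
  rw [hdecomp, hdecomp α, sum_congr rfl fun i hi => sum_congr rfl (hpairs i hi),
    sum_congr rfl hlocal]
  ring

end OffloadingPotential

section OffloadingEnergy

variable {β σ w C E : ℝ}

noncomputable def offloadEnergy (β σ w C x : ℝ) : ℝ :=
  C / (β * Real.logb 2 (1 + w / (x + σ)))

noncomputable def offloadThreshold (β σ w C E : ℝ) : ℝ :=
  w / ((2 : ℝ) ^ (C / (E * β)) - 1) - σ

theorem strictMonoOn_offloadEnergy (hβ : 0 < β) (hw : 0 < w) (hC : 0 < C) :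
    StrictMonoOn (offloadEnergy β σ w C) (Ioi (-σ)) := by
  intro x hx y hy hxy
  have hxσ : 0 < x + σ := neg_lt_iff_pos_add.1 hx
  have hyσ : 0 < y + σ := neg_lt_iff_pos_add.1 hy
  have hsnr : w / (y + σ) < w / (x + σ) := div_lt_div_of_pos_left hw hxσ (by linarith)
  have hrate_pos : 0 < β * Real.logb 2 (1 + w / (y + σ)) :=
    mul_pos hβ (Real.logb_pos one_lt_two (lt_add_of_pos_right 1 (div_pos hw hyσ)))
  have hrate_lt : β * Real.logb 2 (1 + w / (y + σ)) < β * Real.logb 2 (1 + w / (x + σ)) :=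
    mul_lt_mul_of_pos_left (Real.logb_lt_logb one_lt_two (by positivity) (by linarith)) hβ
  exact div_lt_div_of_pos_left hC hrate_pos hrate_lt

theorem offloadEnergy_offloadThreshold (hβ : β ≠ 0) (hw : w ≠ 0) (hC : C ≠ 0) (hE : E ≠ 0) :
    offloadEnergy β σ w C (offloadThreshold β σ w C E) = E := by
  rw [offloadEnergy, offloadThreshold, sub_add_cancel, div_div_cancel₀ hw, add_sub_cancel,
    Real.logb_rpow two_pos one_lt_two.ne']
  field_simp

theorem neg_lt_offloadThreshold (hβ : 0 < β) (hw : 0 < w) (hC : 0 < C) (hE : 0 < E) :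
    -σ < offloadThreshold β σ w C E := by
  have h2 : 1 < (2 : ℝ) ^ (C / (E * β)) := Real.one_lt_rpow one_lt_two (by positivity)
  have : 0 < w / ((2 : ℝ) ^ (C / (E * β)) - 1) := div_pos hw (sub_pos.2 h2)
  rw [offloadThreshold]
  linarith

end OffloadingEnergy

/-- The computation offloading game possesses a pure Nash equilibrium. -/
theorem nash_equilibrium_exists
    (K M : ℕ) (B σ2 τ ζ : ℝ)
    (hB : 0 < B) (hσ : 0 < σ2) (hτ : 0 < τ) (hζ : 0 < ζ)
    (p h I D S : Fin K → ℝ)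
    (hp : ∀ k, 0 < p k) (hh : ∀ k, 0 < h k) (hI : ∀ k, 0 < I k)
    (hD : ∀ k, 0 < D k) (hS : ∀ k, 0 < S k)
    (b : Fin K → ℝ) (hb : ∀ k, b k = 0 ∨ b k = 1)
    (w : Fin K → ℝ) (hw : ∀ k, w k = p k * h k)
    (Υ : Fin K → (Fin K → Fin (M + 1)) → ℝ)
    (hΥ : ∀ k α, Υ k α =
      ∑ n ∈ (Finset.univ.erase k).filter (fun n => α n = α k), w n)
    (r : Fin K → (Fin K → Fin (M + 1)) → ℝ)
    (hr : ∀ k α, r k α = (B / (M : ℝ)) * Real.logb 2 (1 + w k / (Υ k α + σ2)))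
    (EL : Fin K → ℝ) (hEL : ∀ k, EL k = ζ * S k ^ 3 / τ ^ 2)
    (EO : Fin K → (Fin K → Fin (M + 1)) → ℝ)
    (hEO : ∀ k α, EO k α = p k * (I k + (1 - b k) * D k) / r k α)
    (c : Fin K → (Fin K → Fin (M + 1)) → ℝ)
    (hc : ∀ k α, c k α = if α k = 0 then EL k else EO k α)
    (V : Fin K → ℝ)
    (hV : ∀ k, V k = w k /
        ((2 : ℝ) ^ (p k * τ ^ 2 * (M : ℝ) * (I k + (1 - b k) * D k) / (B * ζ * S k ^ 3)) - 1)
      - σ2)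
    (φ : (Fin K → Fin (M + 1)) → ℝ)
    (hφ : ∀ α, φ α =
      (1 / 2) * ∑ k : Fin K, ∑ n ∈ Finset.univ.erase k,
          w k * w n * (if α n = α k then (1 : ℝ) else 0) * (if 0 < α k then (1 : ℝ) else 0)
      + ∑ k : Fin K, w k * V k * (if α k = 0 then (1 : ℝ) else 0))
    :
    ∃ αstar : Fin K → Fin (M + 1),
      ∀ (k : Fin K) (a : Fin (M + 1)),
        c k αstar ≤ c k (Function.update αstar k a) := by
  -- For `M = 0` the rate `B / M` is the junk value `0`, but then there is only one action.
  rcases M.eq_zero_or_pos with rfl | hM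
  · exact ⟨default, fun k a => (congrArg (c k) (Subsingleton.elim (α := Fin K → Fin 1) _ _)).le⟩
  set C : Fin K → ℝ := fun k => p k * (I k + (1 - b k) * D k)
  have hβ : 0 < B / M := div_pos hB (Nat.cast_pos.2 hM)
  have hw_pos : ∀ k, 0 < w k := fun k => hw k ▸ mul_pos (hp k) (hh k)
  have hC : ∀ k, 0 < C k := fun k =>
    mul_pos (hp k) (by rcases hb k with hbk | hbk <;> simp [hbk, hI k, hD k, add_pos])
  have hEL_pos : ∀ k, 0 < EL k := fun k => hEL k ▸ by have := hS k; positivity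
  have hV_eq : ∀ k, V k = offloadThreshold (B / M) σ2 (w k) (C k) (EL k) := fun k => by
    rw [hV, hEL, offloadThreshold]
    congr 4
    simp only [C]
    field_simp
  have hcost : ∀ k α, c k α =
      offloadEnergy (B / M) σ2 (w k) (C k) (effectiveInterference w V 0 k α) := by
    intro k α
    rw [hc, effectiveInterference]
    split_ifs
    · rw [hV_eq, offloadEnergy_offloadThreshold hβ.ne' (hw_pos k).ne' (hC k).ne' (hEL_pos k).ne']
    · rw [hEO, hr, hΥ]; rfl
  have hmem : ∀ k (α : Fin K → Fin (M + 1)), effectiveInterference w V 0 k α ∈ Ioi (-σ2) :=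
    fun k => neg_lt_effectiveInterference (fun n => (hw_pos n).le) hσ
      (hV_eq k ▸ neg_lt_offloadThreshold hβ (hw_pos k) (hC k) (hEL_pos k))
  have hφ_eq : φ = offloadingPotential w V 0 := funext fun α => by
    rw [hφ, offloadingPotential]
    simp only [Fin.pos_iff_ne_zero]
  have hweighted := isWeightedPotential_offloadingPotential w V (0 : Fin (M + 1))
  rw [← hφ_eq] at hweighted
  have hpot : IsGeneralizedOrdinalPotential c φ :=
    (hweighted.isGeneralizedOrdinalPotential hw_pos).comp_strictMonoOn
      (fun k => strictMonoOn_offloadEnergy hβ (hw_pos k) (hC k)) hmem hcost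
  exact hpot.exists_isPureNashEquilibrium
end
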